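/- arXiv:2110.06652 — 5 statements merged into one kernel-verified Lean document; each statement's English description precedes it below -/
import Mathlib

section
/- If a connected finite quiver admits a strictly positive conserved current, then the quiver is strongly connected, i.e., for any two vertices i, j there exists an oriented path from i to j. -/
open Relation

/-- One directed step along an arrow of the quiver. -/
def QStep {V A : Type} (s t : A → V) (i j : V) : Prop := ∃ a : A, s a = i ∧ t a = j

/-- One undirected step along an arrow of the quiver. -/
def UStep {V A : Type} (s t : A → V) (i j : V) : Prop :=
  ∃ a : A, (s a = i ∧ t a = j) ∨ (s a = j ∧ t a = i)

/-- A current is conserved if at each vertex the incoming total equals the outgoing total. -/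
def Conserved {V A : Type} [Fintype A] [DecidableEq V] (s t : A → V) (lam : A → ℝ) : Prop :=
  ∀ i : V, ∑ a ∈ Finset.univ.filter (fun a => t a = i), lam a
         = ∑ a ∈ Finset.univ.filter (fun a => s a = i), lam a

/-- A simple oriented cycle of the quiver: a nonempty cyclically composable list of arrows
whose sources are pairwise distinct. -/
structure SimpleCycle {V A : Type} (s t : A → V) where
  arrows : List A
  nonempty : arrows ≠ []
  chain : ∀ k : ℕ, ∀ h : k < arrows.length,
    t (arrows.get ⟨k, h⟩) =
      s (arrows.get ⟨(k + 1) % arrows.length, Nat.mod_lt _ (List.length_pos_iff.mpr nonempty)⟩)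
  simple : (arrows.map s).Nodup

/-!
Summing conservation over a set `S` of vertices shows that the current entering `S` equals the
current leaving it. Take `S` to be the set of vertices reachable from the head of an arrow `a`:
no arrow leaves `S`, so by positivity no arrow enters `S` from outside either, and in particular
the tail of `a` lies in `S`. Hence every arrow can be traversed backwards by an oriented path,
and undirected connectivity upgrades to strong connectivity.
-/

open Finset

namespace Conserved

variable {V A : Type} [Fintype A] [DecidableEq V] {s t : A → V} {lam : A → ℝ}

theorem sum_target_mem_eq_sum_source_mem (hcons : Conserved s t lam) (S : Finset V) :
    ∑ b ∈ univ.filter (fun b => t b ∈ S), lam b = ∑ b ∈ univ.filter (fun b => s b ∈ S), lam b := by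
  rw [← sum_fiberwise_eq_sum_filter univ S t lam, ← sum_fiberwise_eq_sum_filter univ S s lam]
  exact sum_congr rfl fun i _ => hcons i

theorem source_mem_of_target_mem (hcons : Conserved s t lam) (hpos : ∀ a, 0 < lam a)
    {S : Finset V} (hS : ∀ b, s b ∈ S → t b ∈ S) {a : A} (ha : t a ∈ S) : s a ∈ S := by
  by_contra hsa
  have hlt : ∑ b ∈ univ.filter (fun b => s b ∈ S), lam b
      < ∑ b ∈ univ.filter (fun b => t b ∈ S), lam b :=
    sum_lt_sum_of_subset (fun b hb => by simp_all) (by simpa using ha) (by simpa using hsa)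
      (hpos a) fun b _ _ => (hpos b).le
  exact hlt.ne' (hcons.sum_target_mem_eq_sum_source_mem S)

theorem reflTransGen_target_source (hcons : Conserved s t lam) (hpos : ∀ a, 0 < lam a)
    (a : A) : ReflTransGen (QStep s t) (t a) (s a) := by
  classical
  -- Every vertex reachable from `t a` is `t a` itself or the head of an arrow.
  let S := (univ.image t).filter (ReflTransGen (QStep s t) (t a))
  have hS : ∀ b, s b ∈ S → t b ∈ S := fun b hb => by
    simp only [S, mem_filter, mem_image, mem_univ, true_and] at hb ⊢
    exact ⟨⟨b, rfl⟩, hb.2.tail ⟨b, rfl, rfl⟩⟩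
  have hta : t a ∈ S := mem_filter.mpr ⟨mem_image_of_mem t (mem_univ a), .refl⟩
  exact (mem_filter.mp (hcons.source_mem_of_target_mem hpos hS hta)).2

end Conserved

theorem stmt1_general {V A : Type} [Fintype A] [DecidableEq V]
    (s t : A → V) (lam : A → ℝ)
    (hconn : ∀ i j : V, Relation.ReflTransGen (UStep s t) i j)
    (hpos : ∀ a : A, 0 < lam a)
    (hcons : Conserved s t lam) :
    ∀ i j : V, Relation.ReflTransGen (QStep s t) i j := by
  have hstep : ∀ i j, UStep s t i j → ReflTransGen (QStep s t) i j := by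
    rintro i j ⟨a, ⟨rfl, rfl⟩ | ⟨rfl, rfl⟩⟩
    · exact .single ⟨a, rfl, rfl⟩
    · exact hcons.reflTransGen_target_source hpos a
  exact fun i j => (hconn i j).lift' id hstep

/-- If a connected finite quiver admits a strictly positive conserved current,
then it is strongly connected. -/
theorem stmt1 {V A : Type} [Fintype V] [Fintype A] [DecidableEq V]
    (s t : A → V) (lam : A → ℝ)
    (hconn : ∀ i j : V, Relation.ReflTransGen (UStep s t) i j)
    (hpos : ∀ a : A, 0 < lam a)
    (hcons : Conserved s t lam) :
    ∀ i j : V, Relation.ReflTransGen (QStep s t) i j :=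
  stmt1_general s t lam hconn hpos hcons
end

section
/- If a quiver is not strongly connected, then there is a nontrivial partition of the vertex set Q0 = S ⊔ S' such that every arrow between S and S' goes from S to S' (no arrows from S' to S), and consequently every conserved current vanishes on some arrow (it cannot be strictly positive) whenever there is at least one arrow from S to S'. -/
open Relation

/-! If `j` is not reachable from `i`, the set `S` of vertices from which `j` is reachable is
closed under predecessors, so no arrow enters it. Summing the conservation law over `S` shows
that the total current entering `S` equals the total current leaving it; the former is an
empty sum, so a strictly positive current cannot have an arrow leaving `S`. -/

namespace Conserved

variable {V A : Type} [Fintype A] [DecidableEq V] {s t : A → V} {lam : A → ℝ}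

theorem sum_target_mem_eq_sum_source_mem_s2 (hlam : Conserved s t lam) (S : Set V)
    [DecidablePred (· ∈ S)] :
    ∑ a with t a ∈ S, lam a = ∑ a with s a ∈ S, lam a := by
  -- `V` may be infinite: sum the vertex balances over the vertices of `S` that carry an arrow.
  set T : Finset V := (Finset.univ.image s ∪ Finset.univ.image t).filter (· ∈ S)
  have hsT : ∀ a, s a ∈ T ↔ s a ∈ S := by simp [T]
  have htT : ∀ a, t a ∈ T ↔ t a ∈ S := by simp [T]
  calc ∑ a with t a ∈ S, lam a
      = ∑ i ∈ T, ∑ a with t a = i, lam a := by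
        rw [Finset.sum_fiberwise_eq_sum_filter]
        simp only [htT]
    _ = ∑ i ∈ T, ∑ a with s a = i, lam a := Finset.sum_congr rfl fun i _ => hlam i
    _ = ∑ a with s a ∈ S, lam a := by
        rw [Finset.sum_fiberwise_eq_sum_filter]
        simp only [hsT]

theorem sum_entering_eq_sum_leaving (hlam : Conserved s t lam) (S : Set V)
    [DecidablePred (· ∈ S)] :
    ∑ a with s a ∉ S ∧ t a ∈ S, lam a = ∑ a with s a ∈ S ∧ t a ∉ S, lam a := by
  have hin := Finset.sum_filter_add_sum_filter_not
    (Finset.univ.filter fun a => t a ∈ S) (fun a => s a ∈ S) lam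
  have hout := Finset.sum_filter_add_sum_filter_not
    (Finset.univ.filter fun a => s a ∈ S) (fun a => t a ∈ S) lam
  simp only [Finset.filter_filter, and_comm (a := t _ ∈ S)] at hin hout
  linarith [hlam.sum_target_mem_eq_sum_source_mem_s2 S]

theorem not_forall_pos_of_leaving_of_not_entering (hlam : Conserved s t lam) (S : Set V)
    (hentering : ∀ a, ¬ (s a ∉ S ∧ t a ∈ S)) (hleaving : ∃ a, s a ∈ S ∧ t a ∉ S) :
    ¬ ∀ a, 0 < lam a := by
  classical
  intro hpos
  obtain ⟨a₀, ha₀⟩ := hleaving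
  have hzero : ∑ a with s a ∉ S ∧ t a ∈ S, lam a = 0 :=
    Finset.sum_eq_zero fun a ha => absurd (Finset.mem_filter.mp ha).2 (hentering a)
  have hpos_sum : 0 < ∑ a with s a ∈ S ∧ t a ∉ S, lam a :=
    Finset.sum_pos (fun a _ => hpos a) ⟨a₀, Finset.mem_filter.mpr ⟨Finset.mem_univ _, ha₀⟩⟩
  linarith [hlam.sum_entering_eq_sum_leaving S]

end Conserved

theorem stmt2_general {V A : Type} [Fintype A] [DecidableEq V]
    (s t : A → V)
    (hns : ¬ ∀ i j : V, Relation.ReflTransGen (QStep s t) i j) :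
    ∃ S : Set V, S.Nonempty ∧ Sᶜ.Nonempty ∧
      (∀ a : A, ¬ (s a ∉ S ∧ t a ∈ S)) ∧
      ((∃ a : A, s a ∈ S ∧ t a ∉ S) →
        ∀ lam : A → ℝ, Conserved s t lam → ¬ (∀ a : A, 0 < lam a)) := by
  simp only [not_forall] at hns
  obtain ⟨i, j, hij⟩ := hns
  set S : Set V := {v | ReflTransGen (QStep s t) v j}
  have hentering : ∀ a, ¬ (s a ∉ S ∧ t a ∈ S) := fun a ⟨hsa, hta⟩ => hsa (hta.head ⟨a, rfl, rfl⟩)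
  exact ⟨S, ⟨j, .refl⟩, ⟨i, hij⟩, hentering,
    fun hleaving _ hlam => hlam.not_forall_pos_of_leaving_of_not_entering S hentering hleaving⟩

/-- If a quiver is not strongly connected, there is a nontrivial partition `S ⊔ Sᶜ`
of the vertices with no arrow from `Sᶜ` to `S`; consequently, if there is at least one
arrow from `S` to `Sᶜ`, no conserved current can be strictly positive. -/
theorem stmt2 {V A : Type} [Fintype V] [Fintype A] [DecidableEq V]
    (s t : A → V)
    (hns : ¬ ∀ i j : V, Relation.ReflTransGen (QStep s t) i j) :
    ∃ S : Set V, S.Nonempty ∧ Sᶜ.Nonempty ∧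
      (∀ a : A, ¬ (s a ∉ S ∧ t a ∈ S)) ∧
      ((∃ a : A, s a ∈ S ∧ t a ∉ S) →
        ∀ lam : A → ℝ, Conserved s t lam → ¬ (∀ a : A, 0 < lam a)) :=
  stmt2_general s t hns
end

section
/- For a connected finite graph, the block-cut tree is a tree: the bipartite graph with one node for each biconnected component and one node for each cut vertex (vertex shared by more than one biconnected component), with an edge between a cut vertex v and a block B whenever v ∈ B, is connected and acyclic. -/
set_option linter.unusedSectionVars false

open SimpleGraph List

section Helpers
variable {V : Type} {G : SimpleGraph V}

lemma conn_of_subsingleton (H : G.Subgraph) (hne : H.verts.Nonempty)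
    (hss : H.verts.Subsingleton) : H.Connected := by
  rw [SimpleGraph.Subgraph.connected_iff]
  refine ⟨?_, hne⟩
  rw [SimpleGraph.Subgraph.preconnected_iff]
  intro a b
  have : (a : V) = b := hss a.2 b.2
  rw [Subtype.ext this]

lemma delv_eq_self {H : G.Subgraph} {s : Set V} (h : ∀ v ∈ s, v ∉ H.verts) :
    H.deleteVerts s = H := by
  apply SimpleGraph.Subgraph.ext
  · ext a
    simp only [SimpleGraph.Subgraph.deleteVerts_verts, Set.mem_diff]
    exact ⟨fun h => h.1, fun ha => ⟨ha, fun hs => h a hs ha⟩⟩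
  · ext x y
    simp only [SimpleGraph.Subgraph.deleteVerts_adj]
    exact ⟨fun h => h.2.2.2.2, fun hxy =>
      ⟨hxy.fst_mem, fun hs => h x hs hxy.fst_mem, hxy.snd_mem, fun hs => h y hs hxy.snd_mem, hxy⟩⟩

lemma delv_sup (A B : G.Subgraph) (s : Set V) :
    (A ⊔ B).deleteVerts s = A.deleteVerts s ⊔ B.deleteVerts s := by
  apply SimpleGraph.Subgraph.ext
  · simp [Set.union_diff_distrib]
  · ext x y
    simp only [SimpleGraph.Subgraph.deleteVerts_adj, SimpleGraph.Subgraph.sup_adj,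
      SimpleGraph.Subgraph.verts_sup, Set.mem_union]
    constructor
    · rintro ⟨hv, hvs, hw, hws, (h | h)⟩
      · exact Or.inl ⟨h.fst_mem, hvs, h.snd_mem, hws, h⟩
      · exact Or.inr ⟨h.fst_mem, hvs, h.snd_mem, hws, h⟩
    · rintro (⟨hv, hvs, hw, hws, h⟩ | ⟨hv, hvs, hw, hws, h⟩)
      · exact ⟨Or.inl hv, hvs, Or.inl hw, hws, Or.inl h⟩
      · exact ⟨Or.inr hv, hvs, Or.inr hw, hws, Or.inr h⟩

lemma delv_bot (s : Set V) : (⊥ : G.Subgraph).deleteVerts s = ⊥ := by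
  apply SimpleGraph.Subgraph.ext
  · simp
  · ext x y
    simp [SimpleGraph.Subgraph.deleteVerts_adj]

lemma mem_le_foldrSup : ∀ (L : List G.Subgraph) (K : G.Subgraph), K ∈ L →
    K ≤ L.foldr (· ⊔ ·) ⊥
  | A :: L, K, h => by
    rcases List.mem_cons.mp h with rfl | h
    · exact le_sup_left
    · exact le_trans (mem_le_foldrSup L K h) le_sup_right

lemma foldrSup_append (L1 L2 : List G.Subgraph) :
    (L1 ++ L2).foldr (· ⊔ ·) ⊥ = L1.foldr (· ⊔ ·) ⊥ ⊔ L2.foldr (· ⊔ ·) ⊥ := by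
  induction L1 with
  | nil => simp
  | cons A L ih => simp [ih, sup_assoc]

lemma delv_foldrSup (L : List G.Subgraph) (s : Set V) :
    (L.foldr (· ⊔ ·) ⊥).deleteVerts s = (L.map (·.deleteVerts s)).foldr (· ⊔ ·) ⊥ := by
  induction L with
  | nil => simpa using delv_bot s
  | cons A L ih => simp only [List.foldr, List.map, delv_sup, ih]

lemma chain_sup_connected : ∀ (L : List G.Subgraph), L ≠ [] →
    (∀ K ∈ L, K.Connected) →
    List.Chain' (fun A B => (A.verts ∩ B.verts).Nonempty) L →
    (L.foldr (· ⊔ ·) ⊥).Connected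
  | [], h, _, _ => absurd rfl h
  | [A], _, hc, _ => by simpa using hc A (by simp)
  | A :: B :: L, _, hc, hch => by
    have ih := chain_sup_connected (B :: L) (by simp)
      (fun K hK => hc K (List.mem_cons_of_mem _ hK)) (List.isChain_cons_cons.mp hch).2
    show (A ⊔ (B :: L).foldr (· ⊔ ·) ⊥).Connected
    refine SimpleGraph.Subgraph.connected_sup (hc A (by simp)).preconnected ih.preconnected ?_
    obtain ⟨x, hxA, hxB⟩ := (List.isChain_cons_cons.mp hch).1
    exact ⟨x, hxA, (mem_le_foldrSup (B :: L) B (by simp)).1 hxB⟩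

end Helpers

/-- A subgraph is biconnected if it is connected and remains connected (when still
inhabited) after deleting any single vertex. -/
def IsBiconnectedSub {V : Type} (G : SimpleGraph V) (H : G.Subgraph) : Prop :=
  H.Connected ∧ ∀ v : V, ((H.deleteVerts {v}).verts.Nonempty → (H.deleteVerts {v}).Connected)

/-- A block (biconnected component) is a maximal biconnected subgraph. -/
def IsBlock {V : Type} (G : SimpleGraph V) (H : G.Subgraph) : Prop :=
  IsBiconnectedSub G H ∧ ∀ H' : G.Subgraph, IsBiconnectedSub G H' → H ≤ H' → H' = H

/-- A cut vertex: a vertex shared by two distinct blocks. -/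
def IsCutVertex {V : Type} (G : SimpleGraph V) (v : V) : Prop :=
  ∃ B B' : G.Subgraph, IsBlock G B ∧ IsBlock G B' ∧ B ≠ B' ∧ v ∈ B.verts ∧ v ∈ B'.verts

/-- The block-cut tree: bipartite graph on blocks and cut vertices, with an edge
between a block and each cut vertex it contains. -/
def BlockCutGraph {V : Type} (G : SimpleGraph V) :
    SimpleGraph ({B : G.Subgraph // IsBlock G B} ⊕ {v : V // IsCutVertex G v}) :=
  SimpleGraph.fromRel (fun x y =>
    ∃ (B : {B : G.Subgraph // IsBlock G B}) (v : {v : V // IsCutVertex G v}),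
      x = Sum.inl B ∧ y = Sum.inr v ∧ v.1 ∈ B.1.verts)

section Blocks
variable {V : Type} [Fintype V] [DecidableEq V] {G : SimpleGraph V}

lemma subgraph_finite : Finite G.Subgraph := by
  have : Function.Injective (fun H : G.Subgraph => (H.verts, {p : V × V | H.Adj p.1 p.2})) := by
    intro H K h
    obtain ⟨h1, h2⟩ := Prod.mk.injEq .. ▸ h
    apply SimpleGraph.Subgraph.ext h1
    ext x y
    exact ⟨fun ha => (Set.ext_iff.mp h2 (x, y)).mp ha, fun ha => (Set.ext_iff.mp h2 (x, y)).mpr ha⟩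
  exact Finite.of_injective _ this

lemma exists_block_ge (H : G.Subgraph) (h : IsBiconnectedSub G H) :
    ∃ B, IsBlock G B ∧ H ≤ B := by
  haveI : Finite G.Subgraph := subgraph_finite
  obtain ⟨B, ⟨hB, hHB⟩, hmax⟩ := Set.Finite.exists_maximalFor id
    {H' | IsBiconnectedSub G H' ∧ H ≤ H'} (Set.toFinite _) ⟨H, h, le_rfl⟩
  exact ⟨B, ⟨hB, fun H' hH' hle => le_antisymm (hmax ⟨hH', hHB.trans hle⟩ hle) hle⟩, hHB⟩

lemma bic_singleton (v : V) : IsBiconnectedSub G (G.singletonSubgraph v) := by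
  refine ⟨SimpleGraph.Subgraph.singletonSubgraph_connected, fun w hne => ?_⟩
  refine conn_of_subsingleton _ hne ?_
  intro a ha b hb
  simp only [SimpleGraph.Subgraph.deleteVerts_verts, SimpleGraph.singletonSubgraph_verts,
    Set.mem_diff, Set.mem_singleton_iff] at ha hb
  rw [ha.1, hb.1]

lemma bic_edge {u w : V} (h : G.Adj u w) : IsBiconnectedSub G (G.subgraphOfAdj h) := by
  refine ⟨SimpleGraph.Subgraph.subgraphOfAdj_connected h, fun x hne => ?_⟩
  by_cases hx : x = u ∨ x = w
  · refine conn_of_subsingleton _ hne ?_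
    intro a ha b hb
    simp only [SimpleGraph.Subgraph.deleteVerts_verts, SimpleGraph.subgraphOfAdj_verts,
      Set.mem_diff, Set.mem_insert_iff, Set.mem_singleton_iff] at ha hb
    rcases hx with rfl | rfl
    · rcases ha.1 with rfl | rfl
      · exact absurd rfl ha.2
      · rcases hb.1 with rfl | rfl
        · exact absurd rfl hb.2
        · rfl
    · rcases ha.1 with rfl | rfl
      · rcases hb.1 with rfl | rfl
        · rfl
        · exact absurd rfl hb.2
      · exact absurd rfl ha.2
  · push_neg at hx
    rw [delv_eq_self (by
      intro a ha hmem
      simp only [Set.mem_singleton_iff] at ha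
      subst ha
      simp only [SimpleGraph.subgraphOfAdj_verts, Set.mem_insert_iff,
        Set.mem_singleton_iff] at hmem
      rcases hmem with rfl | rfl
      exacts [hx.1 rfl, hx.2 rfl])]
    exact SimpleGraph.Subgraph.subgraphOfAdj_connected h

lemma exists_block_vert (v : V) : ∃ B, IsBlock G B ∧ v ∈ B.verts := by
  obtain ⟨B, hB, hle⟩ := exists_block_ge _ (bic_singleton (G := G) v)
  exact ⟨B, hB, hle.1 (by simp [SimpleGraph.singletonSubgraph_verts])⟩

lemma exists_block_edge {u w : V} (h : G.Adj u w) :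
    ∃ B, IsBlock G B ∧ u ∈ B.verts ∧ w ∈ B.verts := by
  obtain ⟨B, hB, hle⟩ := exists_block_ge _ (bic_edge h)
  exact ⟨B, hB, hle.1 (by simp), hle.1 (by simp)⟩

lemma bcg_adj_mk (B : {B : G.Subgraph // IsBlock G B}) (u : {v : V // IsCutVertex G v})
    (h : u.1 ∈ B.1.verts) : (BlockCutGraph G).Adj (.inl B) (.inr u) := by
  rw [BlockCutGraph, SimpleGraph.fromRel_adj]
  exact ⟨by simp, Or.inl ⟨B, u, rfl, rfl, h⟩⟩

lemma bcg_adj_elim {x y} (h : (BlockCutGraph G).Adj x y) :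
    ∃ (B : {B : G.Subgraph // IsBlock G B}) (u : {v : V // IsCutVertex G v}),
      u.1 ∈ B.1.verts ∧ ((x = Sum.inl B ∧ y = Sum.inr u) ∨ (x = Sum.inr u ∧ y = Sum.inl B)) := by
  rw [BlockCutGraph, SimpleGraph.fromRel_adj] at h
  obtain ⟨-, (⟨B, u, rfl, rfl, hu⟩ | ⟨B, u, rfl, rfl, hu⟩)⟩ := h
  exacts [⟨B, u, hu, Or.inl ⟨rfl, rfl⟩⟩, ⟨B, u, hu, Or.inr ⟨rfl, rfl⟩⟩]

end Blocks

section Conn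
variable {V : Type} [Fintype V] [DecidableEq V] {G : SimpleGraph V}

lemma reach_same (B B' : {B : G.Subgraph // IsBlock G B}) {v : V}
    (hv : v ∈ B.1.verts) (hv' : v ∈ B'.1.verts) :
    (BlockCutGraph G).Reachable (.inl B) (.inl B') := by
  by_cases h : B = B'
  · subst h; rfl
  · have hcut : IsCutVertex G v :=
      ⟨B.1, B'.1, B.2, B'.2, fun he => h (Subtype.ext he), hv, hv'⟩
    exact (bcg_adj_mk B ⟨v, hcut⟩ hv).reachable.trans
      ((bcg_adj_mk B' ⟨v, hcut⟩ hv').reachable.symm)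

lemma reach_walk : ∀ {u w : V} (_ : G.Walk u w) (B B' : {B : G.Subgraph // IsBlock G B}),
    u ∈ B.1.verts → w ∈ B'.1.verts →
    (BlockCutGraph G).Reachable (.inl B) (.inl B')
  | _, _, SimpleGraph.Walk.nil, B, B', hu, hw => reach_same B B' hu hw
  | _, _, SimpleGraph.Walk.cons h q, B, B', hu, hw => by
    obtain ⟨C, hC, hmu, hmm⟩ := exists_block_edge h
    exact (reach_same B ⟨C, hC⟩ hu hmu).trans (reach_walk q ⟨C, hC⟩ B' hmm hw)

lemma bcg_connected (hG : G.Connected) : (BlockCutGraph G).Connected := by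
  have hV : Nonempty V := hG.nonempty
  obtain ⟨v⟩ := hV
  obtain ⟨B₀, hB₀, hvB₀⟩ := exists_block_vert (G := G) v
  rw [SimpleGraph.connected_iff]
  have toBlock : ∀ x : ({B : G.Subgraph // IsBlock G B} ⊕ {v : V // IsCutVertex G v}),
      ∃ (B : {B : G.Subgraph // IsBlock G B}) (u : V), u ∈ B.1.verts ∧
        (BlockCutGraph G).Reachable x (.inl B) := by
    rintro (B | u)
    · obtain ⟨a, ha⟩ := B.2.1.1.nonempty
      exact ⟨B, a, ha, SimpleGraph.Reachable.refl _⟩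
    · obtain ⟨C, C', hC, hC', hne, huC, huC'⟩ := u.2
      exact ⟨⟨C, hC⟩, u.1, huC, (bcg_adj_mk ⟨C, hC⟩ u huC).symm.reachable⟩
  refine ⟨fun x y => ?_, ⟨.inl ⟨B₀, hB₀⟩⟩⟩
  obtain ⟨Bx, ux, hux, hrx⟩ := toBlock x
  obtain ⟨By, uy, huy, hry⟩ := toBlock y
  obtain ⟨p⟩ := hG.preconnected ux uy
  exact (hrx.trans (reach_walk p Bx By hux huy)).trans hry.symm

end Conn

section Extract
variable {V : Type} [Fintype V] [DecidableEq V] {G : SimpleGraph V}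

/-- Interleaved list of blocks and cut vertices. -/
def pairList (Q : List (G.Subgraph × V)) : List (G.Subgraph ⊕ V) :=
  Q.flatMap fun q => [Sum.inl q.1, Sum.inr q.2]

lemma pairList_cons (q : G.Subgraph × V) (Q : List (G.Subgraph × V)) :
    pairList (q :: Q) = Sum.inl q.1 :: Sum.inr q.2 :: pairList Q := rfl

lemma pairList_filterLeft (Q : List (G.Subgraph × V)) :
    (pairList Q).filterMap Sum.getLeft? = Q.map Prod.fst := by
  induction Q with
  | nil => rfl
  | cons q Q ih =>
    rw [pairList_cons, List.filterMap_cons, List.filterMap_cons]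
    simpa using ih

lemma pairList_filterRight (Q : List (G.Subgraph × V)) :
    (pairList Q).filterMap Sum.getRight? = Q.map Prod.snd := by
  induction Q with
  | nil => rfl
  | cons q Q ih =>
    rw [pairList_cons, List.filterMap_cons, List.filterMap_cons]
    simpa using ih

lemma sum_map_injective : Function.Injective
    (Sum.map (Subtype.val : {B : G.Subgraph // IsBlock G B} → G.Subgraph)
      (Subtype.val : {v : V // IsCutVertex G v} → V)) := by
  rintro (a | a) (b | b) h <;> simp_all <;> exact Subtype.ext h

lemma extract (B' : {B : G.Subgraph // IsBlock G B}) :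
    ∀ (n : ℕ) (B : {B : G.Subgraph // IsBlock G B})
      (p : (BlockCutGraph G).Walk (.inl B) (.inl B')), p.length = n →
    ∃ Q : List (G.Subgraph × V),
      (∀ q ∈ Q, IsBlock G q.1 ∧ q.2 ∈ q.1.verts) ∧
      List.Chain' (fun a b => a.2 ∈ b.1.verts) Q ∧
      (∀ a ∈ Q.getLast?, a.2 ∈ B'.1.verts) ∧
      p.support.map (Sum.map Subtype.val Subtype.val) = pairList Q ++ [Sum.inl B'.1] := by
  intro n
  induction n using Nat.strong_induction_on with
  | _ n ih =>
    intro B p hn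
    cases p with
    | nil => exact ⟨[], by simp, by exact List.isChain_nil, by simp, by simp [pairList]⟩
    | @cons _ y _ h q =>
      obtain ⟨B1, u, hu, hcase⟩ := bcg_adj_elim h
      rcases hcase with ⟨hB1, rfl⟩ | ⟨habs, -⟩
      swap
      · exact absurd habs (by simp)
      replace hB1 : B1 = B := by injection hB1 with h'; exact h'.symm
      subst hB1
      cases q with
      | @cons _ z _ h2 q2 =>
        obtain ⟨C, u2, hu2, hcase2⟩ := bcg_adj_elim h2
        rcases hcase2 with ⟨habs, -⟩ | ⟨hu2', rfl⟩
        · exact absurd habs (by simp)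
        replace hu2' : u2 = u := by injection hu2' with h'; exact h'.symm
        subst hu2'
        rw [SimpleGraph.Walk.length_cons, SimpleGraph.Walk.length_cons] at hn
        obtain ⟨Q2, hbl2, hch2, hlast2, hsup2⟩ := ih q2.length (by omega) C q2 rfl
        have hq2head : q2.support = Sum.inl C :: q2.support.tail :=
          q2.support_eq_cons
        refine ⟨(B1.1, u2.1) :: Q2, ?_, ?_, ?_, ?_⟩
        · intro q hq
          rcases List.mem_cons.mp hq with rfl | hq
          · exact ⟨B1.2, hu⟩
          · exact hbl2 q hq
        · rw [List.Chain', List.isChain_cons]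
          refine ⟨?_, hch2⟩
          intro b hb
          cases Q2 with
          | nil => simp at hb
          | cons q0 Q2' =>
            simp only [List.head?_cons, Option.mem_def, Option.some.injEq] at hb
            subst hb
            have hq0 : q0.1 = C.1 := by
              rw [hq2head, List.map_cons, pairList_cons, List.cons_append] at hsup2
              have := List.head_eq_of_cons_eq hsup2
              simpa using this.symm
            rw [hq0]; exact hu2
        · intro a ha
          cases Q2 with
          | nil =>
            simp only [pairList, List.flatMap_nil, List.nil_append] at hsup2
            rw [hq2head, List.map_cons] at hsup2
            have hCB : C.1 = B'.1 := by
              have := List.head_eq_of_cons_eq hsup2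
              simpa using this
            simp only [List.getLast?_cons, List.getLast?_nil] at ha
            simp only [Option.mem_def, Option.some.injEq] at ha
            have : a = (B1.1, u2.1) := by simpa using ha.symm
            subst this
            exact hCB ▸ hu2
          | cons q0 Q2' =>
            rw [List.getLast?_cons_cons] at ha
            exact hlast2 a ha
        · rw [SimpleGraph.Walk.support_cons, SimpleGraph.Walk.support_cons,
            List.map_cons, List.map_cons, pairList_cons, List.cons_append, List.cons_append]
          simpa using hsup2

end Extract

section CycleFalse
variable {V : Type} [Fintype V] [DecidableEq V] {G : SimpleGraph V}

lemma chain_cycle_false (P : List (G.Subgraph × V)) (hlen : 2 ≤ P.length)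
    (hbl : ∀ q ∈ P, IsBlock G q.1 ∧ q.2 ∈ q.1.verts)
    (hch : List.Chain' (fun a b => a.2 ∈ b.1.verts) P)
    (hcl : ∀ (h : P ≠ []), (P.getLast h).2 ∈ (P.head h).1.verts)
    (hfst : (P.map Prod.fst).Nodup) (hsnd : (P.map Prod.snd).Nodup) : False := by
  classical
  have hne : P ≠ [] := by rintro rfl; simp at hlen
  have hsndi : ∀ (i j : ℕ) (hi : i < P.length) (hj : j < P.length),
      (P[i]).2 = (P[j]).2 → i = j := by
    intro i j hi hj hij
    have h1 : (P.map Prod.snd)[i]'(by simpa) = (P.map Prod.snd)[j]'(by simpa) := by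
      simpa using hij
    exact (hsnd.getElem_inj_iff).mp h1
  have hchg : ∀ (i : ℕ) (h : i + 1 < P.length), (P[i]).2 ∈ (P[i+1]'(h)).1.verts := by
    intro i h
    have := List.isChain_iff_getElem.mp hch i (by omega)
    simpa using this
  have hz : (P[P.length - 1]'(by omega)).2 ∈ (P[0]'(by omega)).1.verts := by
    have := hcl hne
    rwa [List.getLast_eq_getElem, List.head_eq_getElem_zero] at this
  have htwo : ∀ q ∈ P, ∀ w : V, ∃ x, x ∈ q.1.verts ∧ x ≠ w := by
    intro q hq w
    obtain ⟨i, hi, rfl⟩ := List.mem_iff_getElem.mp hq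
    rcases Nat.eq_zero_or_pos i with rfl | hpos
    · by_cases hw : (P[0]'(hi)).2 = w
      · refine ⟨(P[P.length - 1]'(by omega)).2, hz, fun hc => ?_⟩
        have := hsndi (P.length - 1) 0 (by omega) hi (by rw [hc, hw])
        omega
      · exact ⟨(P[0]'(hi)).2, (hbl _ (List.getElem_mem hi)).2, hw⟩
    · by_cases hw : (P[i]'(hi)).2 = w
      · refine ⟨(P[i-1]'(by omega)).2, ?_, fun hc => ?_⟩
        · have := hchg (i-1) (by omega)
          have heq : i - 1 + 1 = i := by omega
          simpa [heq] using this
        · have := hsndi (i-1) i (by omega) hi (by rw [hc, hw])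
          omega
      · exact ⟨(P[i]'(hi)).2, (hbl _ (List.getElem_mem hi)).2, hw⟩
  have hdelconn : ∀ q ∈ P, ∀ w : V, (q.1.deleteVerts {w}).Connected := by
    intro q hq w
    refine ((hbl q hq).1).1.2 w ?_
    obtain ⟨x, hx, hxw⟩ := htwo q hq w
    exact ⟨x, by simp [SimpleGraph.Subgraph.deleteVerts_verts, hx, hxw]⟩
  -- connected sup over a segment
  have main : ∀ (w : V) (L : List (G.Subgraph × V)), L ≠ [] → (∀ q ∈ L, q ∈ P) →
      List.Chain' (fun a b => a.2 ≠ w ∧ a.2 ∈ a.1.verts ∧ a.2 ∈ b.1.verts) L →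
      ((L.map (fun q : G.Subgraph × V => q.1.deleteVerts {w})).foldr (· ⊔ ·) ⊥).Connected := by
    intro w L hLne hsub hchL
    refine chain_sup_connected _ (by simpa using hLne) ?_ ?_
    · intro K hK
      obtain ⟨q, hqL, rfl⟩ := List.mem_map.mp hK
      exact hdelconn q (hsub q hqL) w
    · rw [List.Chain', List.isChain_map]
      refine hchL.imp ?_
      rintro a b ⟨h1, h2, h3⟩
      exact ⟨a.2, by simp [SimpleGraph.Subgraph.deleteVerts_verts, h2, h1],
        by simp [SimpleGraph.Subgraph.deleteVerts_verts, h3, h1]⟩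
  set H := (P.map Prod.fst).foldr (· ⊔ ·) ⊥ with hH
  have hHconn : H.Connected := by
    refine chain_sup_connected _ (by simpa using hne) ?_ ?_
    · intro K hK
      obtain ⟨q, hqL, rfl⟩ := List.mem_map.mp hK
      exact (hbl q hqL).1.1.1
    · rw [List.Chain', List.isChain_map, List.isChain_iff_getElem]
      intro i h
      have h' : i + 1 < P.length := by omega
      refine ⟨(P.get ⟨i, by omega⟩).2, (hbl _ (P.get_mem _)).2, ?_⟩
      have := hchg i h'
      simpa using this
  have hHdel : ∀ w : V, ((H.deleteVerts {w}).verts.Nonempty → (H.deleteVerts {w}).Connected) := by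
    intro w _
    have hform : H.deleteVerts {w} =
        (P.map (fun q : G.Subgraph × V => q.1.deleteVerts {w})).foldr (· ⊔ ·) ⊥ := by
      rw [hH, delv_foldrSup, List.map_map]
      rfl
    rw [hform]
    by_cases hcase : ∀ (i : ℕ) (h : i + 1 < P.length), (P[i]).2 ≠ w
    · refine main w P hne (fun q h => h) ?_
      rw [List.Chain', List.isChain_iff_getElem]
      intro i h
      have h' : i + 1 < P.length := by omega
      exact ⟨by simpa using hcase i h', by
          simpa using (hbl _ (P.get_mem ⟨i, by omega⟩)).2, by simpa using hchg i h'⟩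
    · push_neg at hcase
      obtain ⟨j, hj1, hjw⟩ := hcase
      set L1 := P.take (j+1) with hL1
      set L2 := P.drop (j+1) with hL2
      have hlen1 : L1.length = j + 1 := by simp [hL1]; omega
      have hlen2 : L2.length = P.length - (j+1) := by simp [hL2]
      have hL1g : ∀ (i : ℕ) (h : i < L1.length), L1[i] = P[i]'(by rw [hlen1] at h; omega) := by
        intro i h; simp [hL1]
      have hL2g : ∀ (i : ℕ) (h : i < L2.length),
          L2[i] = P[j+1+i]'(by rw [hlen2] at h; omega) := by
        intro i h; simp [hL2]
      have hs1 : ((L1.map (fun q : G.Subgraph × V => q.1.deleteVerts {w})).foldr (· ⊔ ·) ⊥).Connected := by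
        refine main w L1 (by intro hc; rw [hc] at hlen1; simp at hlen1)
          (fun q h => (List.take_sublist _ _).subset h) ?_
        rw [List.Chain', List.isChain_iff_getElem]
        intro i h
        have hi1 : i + 1 < L1.length := by omega
        have hiP : i + 1 < P.length := by rw [hlen1] at hi1; omega
        have e1 : L1.get ⟨i, by omega⟩ = P[i]'(by omega) := by
          simpa using hL1g i (by omega)
        have e2 : L1.get ⟨i+1, by omega⟩ = P[i+1]'(hiP) := by
          simpa using hL1g (i+1) (by omega)
        simp only [List.get_eq_getElem] at e1 e2
        rw [e1, e2]
        refine ⟨?_, (hbl _ (List.getElem_mem _)).2, hchg i hiP⟩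
        intro hc
        have := hsndi i j (by omega) (by omega) (by rw [hc, hjw])
        rw [hlen1] at hi1
        omega
      have hs2 : ((L2.map (fun q : G.Subgraph × V => q.1.deleteVerts {w})).foldr (· ⊔ ·) ⊥).Connected := by
        refine main w L2 (by intro hc; rw [hc] at hlen2; simp at hlen2; omega)
          (fun q h => (List.drop_sublist _ _).subset h) ?_
        rw [List.Chain', List.isChain_iff_getElem]
        intro i h
        have hi1 : i + 1 < L2.length := by omega
        have hiP : j + 1 + (i+1) < P.length := by rw [hlen2] at hi1; omega
        have e1 : L2.get ⟨i, by omega⟩ = P[j+1+i]'(by omega) := by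
          simpa using hL2g i (by omega)
        have e2 : L2.get ⟨i+1, by omega⟩ = P[j+1+(i+1)]'(hiP) := by
          simpa using hL2g (i+1) (by omega)
        simp only [List.get_eq_getElem] at e1 e2
        rw [e1, e2]
        have hlink : (P[j+1+i]'(by omega)).2 ∈ (P[j+1+(i+1)]'(hiP)).1.verts := by
          have := hchg (j+1+i) (by omega)
          simpa [show j+1+i+1 = j+1+(i+1) by omega] using this
        refine ⟨?_, (hbl _ (List.getElem_mem _)).2, hlink⟩
        intro hc
        have := hsndi (j+1+i) j (by omega) (by omega) (by rw [hc, hjw])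
        omega
      -- the closing vertex z lies in both parts
      obtain ⟨z, hzdef⟩ : ∃ z, z = (P[P.length - 1]'(by omega)).2 := ⟨_, rfl⟩
      have hzw : z ≠ w := by
        intro hc
        have := hsndi (P.length - 1) j (by omega) (by omega) (by rw [← hzdef, hc, hjw])
        omega
      have hzP0 : z ∈ (P[0]'(by omega)).1.verts := by rw [hzdef]; exact hz
      have hzlast : z ∈ (P[P.length - 1]'(by omega)).1.verts := by
        rw [hzdef]; exact (hbl _ (List.getElem_mem _)).2
      have hzin1 : z ∈ (((L1.map (fun q : G.Subgraph × V => q.1.deleteVerts {w})).foldr (· ⊔ ·) ⊥)).verts := by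
        have h0 : P[0]'(by omega) ∈ L1 := by
          have : L1[0]'(by omega) = P[0]'(by omega) := hL1g 0 (by omega)
          rw [← this]
          exact List.getElem_mem _
        have hmem : ((P[0]'(by omega)).1.deleteVerts {w}) ∈
            L1.map (fun q : G.Subgraph × V => q.1.deleteVerts {w}) := List.mem_map_of_mem h0
        refine (mem_le_foldrSup _ _ hmem).1 ?_
        simp only [SimpleGraph.Subgraph.deleteVerts_verts, Set.mem_diff, Set.mem_singleton_iff]
        exact ⟨hzP0, hzw⟩
      have hzin2 : z ∈ (((L2.map (fun q : G.Subgraph × V => q.1.deleteVerts {w})).foldr (· ⊔ ·) ⊥)).verts := by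
        have hlast : P[P.length - 1]'(by omega) ∈ L2 := by
          have hi2 : P.length - 1 - (j+1) < L2.length := by rw [hlen2]; omega
          have : L2[P.length - 1 - (j+1)]'(hi2) = P[P.length - 1]'(by omega) := by
            have := hL2g (P.length - 1 - (j+1)) hi2
            simpa [show j + 1 + (P.length - 1 - (j+1)) = P.length - 1 by omega] using this
          rw [← this]
          exact List.getElem_mem _
        have hmem : ((P[P.length - 1]'(by omega)).1.deleteVerts {w}) ∈
            L2.map (fun q : G.Subgraph × V => q.1.deleteVerts {w}) := List.mem_map_of_mem hlast
        refine (mem_le_foldrSup _ _ hmem).1 ?_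
        simp only [SimpleGraph.Subgraph.deleteVerts_verts, Set.mem_diff, Set.mem_singleton_iff]
        exact ⟨hzlast, hzw⟩
      have hsplit : (P.map (fun q : G.Subgraph × V => q.1.deleteVerts {w})).foldr (· ⊔ ·) ⊥ =
          ((L1.map (fun q : G.Subgraph × V => q.1.deleteVerts {w})).foldr (· ⊔ ·) ⊥) ⊔
          ((L2.map (fun q : G.Subgraph × V => q.1.deleteVerts {w})).foldr (· ⊔ ·) ⊥) := by
        conv_lhs => rw [← List.take_append_drop (j+1) P]
        rw [List.map_append, foldrSup_append]
      rw [hsplit]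
      exact SimpleGraph.Subgraph.connected_sup hs1.preconnected hs2.preconnected ⟨z, hzin1, hzin2⟩
  have hbic : IsBiconnectedSub G H := ⟨hHconn, hHdel⟩
  have h0m : (P[0]'(by omega)) ∈ P := List.getElem_mem _
  have h1m : (P[1]'(by omega)) ∈ P := List.getElem_mem _
  have h0le : (P[0]'(by omega)).1 ≤ H := mem_le_foldrSup _ _ (List.mem_map_of_mem h0m)
  have h1le : (P[1]'(by omega)).1 ≤ H := mem_le_foldrSup _ _ (List.mem_map_of_mem h1m)
  have hH0 : H = (P[0]'(by omega)).1 := ((hbl _ h0m).1).2 H hbic h0le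
  have h01 : (P[0]'(by omega)).1 = (P[1]'(by omega)).1 := by
    refine ((hbl _ h1m).1).2 _ ?_ ?_
    · rw [← hH0]; exact hbic
    · rw [← hH0]; exact h1le
  have h01' : (0 : ℕ) = 1 := by
    have h1 : (P.map Prod.fst)[0]'(by simpa using (by omega : 0 < P.length)) =
        (P.map Prod.fst)[1]'(by simpa using (by omega : 1 < P.length)) := by
      simpa using h01
    exact hfst.getElem_inj_iff.mp h1
  simp at h01'

end CycleFalse

section Main
variable {V : Type} [Fintype V] [DecidableEq V] {G : SimpleGraph V}

lemma pairList_length (Q : List (G.Subgraph × V)) : (pairList Q).length = 2 * Q.length := by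
  induction Q with
  | nil => rfl
  | cons q Q ih => rw [pairList_cons]; simp only [List.length_cons, ih]; omega

lemma no_cycle_from_block (B : {B : G.Subgraph // IsBlock G B})
    (c : (BlockCutGraph G).Walk (.inl B) (.inl B)) (hc : c.IsCycle) : False := by
  obtain ⟨Q, hbl, hch, hlast, hsup⟩ := extract B c.length B c rfl
  have hsupl : c.support.length = c.length + 1 := SimpleGraph.Walk.length_support c
  have h3 := hc.three_le_length
  have hQlen : 2 ≤ Q.length := by
    have hlc := congrArg List.length hsup
    rw [List.length_map, hsupl, List.length_append, pairList_length] at hlc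
    simp at hlc
    omega
  have hQne : Q ≠ [] := by intro h; rw [h] at hQlen; simp at hQlen
  obtain ⟨q0, Qt, rfl⟩ : ∃ q0 Qt, Q = q0 :: Qt := by
    cases Q with
    | nil => exact absurd rfl hQne
    | cons a l => exact ⟨a, l, rfl⟩
  have hsupcons : c.support.map (Sum.map Subtype.val Subtype.val) =
      Sum.inl B.1 :: (c.support.tail.map (Sum.map Subtype.val Subtype.val)) := by
    conv_lhs => rw [c.support_eq_cons]
    simp only [List.map_cons, Sum.map_inl]
  have hhead : q0.1 = B.1 := by
    rw [hsupcons, pairList_cons, List.cons_append] at hsup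
    have := List.head_eq_of_cons_eq hsup
    injection this with h'
    exact h'.symm
  have hmapnd : (c.support.tail.map (Sum.map Subtype.val Subtype.val)).Nodup :=
    hc.2.map sum_map_injective
  -- snd nodup
  have hfilR : (c.support.tail.map (Sum.map Subtype.val Subtype.val)).filterMap Sum.getRight? =
      (q0 :: Qt).map Prod.snd := by
    have h1 := congrArg (List.filterMap Sum.getRight?) hsup
    rw [hsupcons] at h1
    rw [List.filterMap_cons] at h1
    simp only [Sum.getRight?] at h1
    rw [List.filterMap_append, pairList_filterRight] at h1
    simpa [List.filterMap_cons, Sum.getRight?] using h1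
  have hsndN : ((q0 :: Qt).map Prod.snd).Nodup := by
    rw [← hfilR]
    exact hmapnd.filterMap (by
      intro a b cc h1 h2
      cases a with
      | inl a' => simp [Sum.getRight?] at h1
      | inr a' =>
        cases b with
        | inl b' => simp [Sum.getRight?] at h2
        | inr b' =>
          obtain rfl : a' = cc := by simpa [Sum.getRight?] using h1
          obtain rfl : b' = a' := by simpa [Sum.getRight?] using h2
          rfl)
  -- fst nodup
  have hfilL : (c.support.tail.map (Sum.map Subtype.val Subtype.val)).filterMap Sum.getLeft? =
      Qt.map Prod.fst ++ [B.1] := by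
    have h1 := congrArg (List.filterMap Sum.getLeft?) hsup
    rw [hsupcons] at h1
    rw [List.filterMap_cons] at h1
    simp only [Sum.getLeft?] at h1
    rw [List.filterMap_append, pairList_filterLeft] at h1
    simp only [List.map_cons, hhead] at h1
    simp only [List.filterMap_cons, List.filterMap_nil] at h1
    have h2 : Sum.getLeft? (Sum.inl B.1 : G.Subgraph ⊕ V) = some B.1 := rfl
    rw [h2] at h1
    -- h1 : B.1 :: filterMap ... = (B.1 :: map fst Qt) ++ [B.1]
    rw [List.cons_append] at h1
    exact List.tail_eq_of_cons_eq h1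
  have hfstN : (((q0 :: Qt)).map Prod.fst).Nodup := by
    have hnd : (Qt.map Prod.fst ++ [B.1]).Nodup := hfilL ▸ hmapnd.filterMap (by
      intro a b cc h1 h2
      cases a with
      | inr a' => simp [Sum.getLeft?] at h1
      | inl a' =>
        cases b with
        | inr b' => simp [Sum.getLeft?] at h2
        | inl b' =>
          obtain rfl : a' = cc := by simpa [Sum.getLeft?] using h1
          obtain rfl : b' = a' := by simpa [Sum.getLeft?] using h2
          rfl)
    rw [List.nodup_append] at hnd
    rw [List.map_cons, hhead, List.nodup_cons]
    refine ⟨fun hmem => ?_, hnd.1⟩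
    exact hnd.2.2 _ hmem _ (by simp) rfl
  -- closing
  have hcl : ∀ (h : (q0 :: Qt) ≠ []), ((q0 :: Qt).getLast h).2 ∈ ((q0 :: Qt).head h).1.verts := by
    intro h
    have := hlast ((q0 :: Qt).getLast h) (by simp [List.getLast?_eq_getLast h])
    simpa [hhead] using this
  exact chain_cycle_false (q0 :: Qt) hQlen hbl hch hcl hfstN hsndN

end Main

/-- For a connected finite graph, the block-cut tree is a tree. -/
theorem stmt6 {V : Type} [Fintype V] [DecidableEq V]
    (G : SimpleGraph V) (hG : G.Connected) :
    (BlockCutGraph G).IsTree := by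
  classical
  constructor
  · exact bcg_connected hG
  · intro x c hc
    cases x with
    | inl B => exact no_cycle_from_block B c hc
    | inr v =>
      cases c with
      | nil => exact hc.ne_nil rfl
      | cons h q =>
        obtain ⟨B1, u, hu, hcase⟩ := bcg_adj_elim h
        rcases hcase with ⟨habs, -⟩ | ⟨-, rfl⟩
        · exact absurd habs (by simp)
        · have hy : Sum.inl B1 ∈ (SimpleGraph.Walk.cons h q).support := by
            rw [SimpleGraph.Walk.support_cons]
            exact List.mem_cons_of_mem _ q.start_mem_support
          exact no_cycle_from_block B1 ((SimpleGraph.Walk.cons h q).rotate _ hy) (hc.rotate hy)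
end

section
/- A current on a connected quiver is conserved if and only if its restriction to each biconnected component is a conserved current on that component. -/
/-!
Conservation of `lam` on an arrow set `B` says that `lam` lies in the kernel of the boundary map
`∂_B` of the subquiver `B`. Loops have zero boundary and every other arrow lies in exactly one
block, so `∂ = ∑_B ∂_B` over the blocks; this gives one direction. Conversely, the kernel of `∂`
is spanned by the flows around simple unoriented cycles: following the sign of a conserved
current from arrow to arrow never gets stuck, so it closes up a cycle, and subtracting a multiple
of that cycle's flow shrinks the support. A simple cycle is biconnected, so if it shares a
non-loop arrow with a block it lies inside the block, and otherwise it meets the block only in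
loops; either way its flow is conserved on the block.
-/

open Relation

/-- The set of vertices touched by a set of arrows. -/
def QVerts {V A : Type} (s t : A → V) (B : Set A) : Set V :=
  {v | ∃ a ∈ B, s a = v ∨ t a = v}

/-- One undirected step along an arrow of `B` avoiding the vertex set `X`. -/
def AvoidStep {V A : Type} (s t : A → V) (B : Set A) (X : Set V) (i j : V) : Prop :=
  i ∉ X ∧ j ∉ X ∧ ∃ a ∈ B, (s a = i ∧ t a = j) ∨ (s a = j ∧ t a = i)

/-- The subquiver on the arrow set `B` is connected after removing the vertices of `X`. -/
def ConnAvoid {V A : Type} (s t : A → V) (B : Set A) (X : Set V) : Prop :=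
  ∀ i ∈ QVerts s t B \ X, ∀ j ∈ QVerts s t B \ X,
    Relation.ReflTransGen (AvoidStep s t B X) i j

/-- A nonempty arrow set is biconnected if it stays connected after removing any
single vertex (or none). -/
def IsBiconnQ {V A : Type} (s t : A → V) (B : Set A) : Prop :=
  B.Nonempty ∧ ∀ X : Set V, X.Subsingleton → ConnAvoid s t B X

/-- A biconnected component (block) of the quiver: a maximal biconnected arrow set. -/
def IsBlockQ {V A : Type} (s t : A → V) (B : Set A) : Prop :=
  IsBiconnQ s t B ∧ ∀ B' : Set A, IsBiconnQ s t B' → B ⊆ B' → B' = B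

open scoped Classical in
/-- The restriction of a current to an arrow set `B` is conserved on `B`. -/
def ConservedOn {V A : Type} [Fintype A] (s t : A → V) (B : Set A) (lam : A → ℝ) : Prop :=
  ∀ i : V, ∑ a ∈ Finset.univ.filter (fun a => a ∈ B ∧ t a = i), lam a
         = ∑ a ∈ Finset.univ.filter (fun a => a ∈ B ∧ s a = i), lam a

open Function Finset

section Boundary

variable {V A : Type} (s t : A → V)

open scoped Classical in
noncomputable def arrowBoundary (a : A) : V → ℝ := Pi.single (t a) 1 - Pi.single (s a) 1

/-- The boundary map `∂₁` of the subquiver with arrow set `B`. -/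
noncomputable def boundaryOn [Fintype A] (B : Set A) : (A → ℝ) →ₗ[ℝ] V → ℝ :=
  Fintype.linearCombination ℝ (B.indicator (arrowBoundary s t))

variable {s t}

theorem arrowBoundary_eq_zero_of_loop {a : A} (h : s a = t a) : arrowBoundary s t a = 0 := by
  rw [arrowBoundary, h, sub_self]

theorem boundaryOn_single [Fintype A] [DecidableEq A] (B : Set A) (a : A) :
    boundaryOn s t B (Pi.single a 1) = B.indicator (arrowBoundary s t) a := by
  rw [boundaryOn, Fintype.linearCombination_apply_single, one_smul]

theorem conservedOn_iff_boundaryOn_eq_zero [Fintype A] {B : Set A} {lam : A → ℝ} :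
    ConservedOn s t B lam ↔ boundaryOn s t B lam = 0 := by
  classical
  rw [funext_iff]
  refine forall_congr' fun i => ?_
  rw [Pi.zero_apply, ← sub_eq_zero, boundaryOn, Fintype.linearCombination_apply,
    Finset.sum_apply, Finset.sum_filter, Finset.sum_filter, ← Finset.sum_sub_distrib]
  refine iff_of_eq (congrArg (· = 0) (Finset.sum_congr rfl fun a _ => ?_))
  by_cases ha : a ∈ B <;> simp [ha, arrowBoundary, Pi.single_apply, eq_comm, mul_sub]

theorem conserved_iff_conservedOn_univ [Fintype A] [DecidableEq V] {lam : A → ℝ} :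
    Conserved s t lam ↔ ConservedOn s t Set.univ lam := by
  simp [Conserved, ConservedOn]

end Boundary

section Blocks

variable {V A : Type} {s t : A → V}

instance {B : Set A} {X : Set V} : Std.Symm (AvoidStep s t B X) where
  symm _ _ := fun ⟨hi, hj, a, ha, h⟩ => ⟨hj, hi, a, ha, h.symm⟩

theorem AvoidStep.mono {B B' : Set A} {X : Set V} (hBB' : B ⊆ B') {i j : V}
    (h : AvoidStep s t B X i j) : AvoidStep s t B' X i j :=
  let ⟨hi, hj, a, ha, h⟩ := h
  ⟨hi, hj, a, hBB' ha, h⟩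

theorem qVerts_union (B B' : Set A) :
    QVerts s t (B ∪ B') = QVerts s t B ∪ QVerts s t B' := by
  ext v
  simp [QVerts, or_and_right, exists_or]

theorem source_mem_qVerts {B : Set A} {a : A} (ha : a ∈ B) : s a ∈ QVerts s t B :=
  ⟨a, ha, Or.inl rfl⟩

theorem target_mem_qVerts {B : Set A} {a : A} (ha : a ∈ B) : t a ∈ QVerts s t B :=
  ⟨a, ha, Or.inr rfl⟩

/-- Removing one vertex leaves one of `u`, `w` in place, and both halves stay connected to it. -/
theorem IsBiconnQ.union {B₁ B₂ : Set A} (h₁ : IsBiconnQ s t B₁) (h₂ : IsBiconnQ s t B₂)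
    {u w : V} (huw : u ≠ w) (hu₁ : u ∈ QVerts s t B₁) (hu₂ : u ∈ QVerts s t B₂)
    (hw₁ : w ∈ QVerts s t B₁) (hw₂ : w ∈ QVerts s t B₂) :
    IsBiconnQ s t (B₁ ∪ B₂) := by
  refine ⟨h₁.1.mono Set.subset_union_left, fun X hX i hi j hj => ?_⟩
  obtain ⟨z, hz₁, hz₂, hzX⟩ : ∃ z ∈ QVerts s t B₁, z ∈ QVerts s t B₂ ∧ z ∉ X := by
    by_cases hu : u ∈ X
    · exact ⟨w, hw₁, hw₂, fun hw => huw (hX hu hw)⟩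
    · exact ⟨u, hu₁, hu₂, hu⟩
  have to_z : ∀ k ∈ QVerts s t (B₁ ∪ B₂) \ X,
      ReflTransGen (AvoidStep s t (B₁ ∪ B₂) X) k z := by
    rintro k ⟨hk, hkX⟩
    rcases (qVerts_union B₁ B₂ ▸ hk : k ∈ QVerts s t B₁ ∪ QVerts s t B₂) with hk | hk
    · exact ReflTransGen.mono (fun _ _ => AvoidStep.mono Set.subset_union_left) _ _
        (h₁.2 X hX k ⟨hk, hkX⟩ z ⟨hz₁, hzX⟩)
    · exact ReflTransGen.mono (fun _ _ => AvoidStep.mono Set.subset_union_right) _ _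
        (h₂.2 X hX k ⟨hk, hkX⟩ z ⟨hz₂, hzX⟩)
  exact (to_z i hi).trans (Std.Symm.symm _ _ (to_z j hj))

theorem isBiconnQ_singleton (a : A) : IsBiconnQ s t {a} := by
  refine ⟨Set.singleton_nonempty a, fun X _ i hi j hj => ?_⟩
  obtain ⟨⟨_, rfl, hi'⟩, hiX⟩ := hi
  obtain ⟨⟨_, rfl, hj'⟩, hjX⟩ := hj
  rcases hi' with rfl | rfl <;> rcases hj' with rfl | rfl
  · rfl
  · exact .single ⟨hiX, hjX, _, rfl, .inl ⟨rfl, rfl⟩⟩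
  · exact .single ⟨hiX, hjX, _, rfl, .inr ⟨rfl, rfl⟩⟩
  · rfl

theorem exists_isBlockQ_mem [Finite A] (a : A) : ∃ B, IsBlockQ s t B ∧ a ∈ B := by
  obtain ⟨B, ⟨hB, haB⟩, hmax⟩ := Set.Finite.exists_maximalFor id
    {B | IsBiconnQ s t B ∧ a ∈ B} (Set.toFinite _) ⟨{a}, isBiconnQ_singleton a, rfl⟩
  exact ⟨B, ⟨hB, fun B' hB' hBB' => (hmax ⟨hB', hBB' haB⟩ hBB').antisymm hBB'⟩, haB⟩

theorem IsBlockQ.subset_of_mem {B C : Set A} (hB : IsBlockQ s t B) (hC : IsBiconnQ s t C)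
    {a : A} (ha : s a ≠ t a) (haB : a ∈ B) (haC : a ∈ C) : C ⊆ B := by
  have hBC := hB.1.union hC ha (source_mem_qVerts haB) (source_mem_qVerts haC)
    (target_mem_qVerts haB) (target_mem_qVerts haC)
  exact hB.2 _ hBC Set.subset_union_left ▸ Set.subset_union_right

theorem IsBlockQ.eq_of_mem {B C : Set A} (hB : IsBlockQ s t B) (hC : IsBlockQ s t C)
    {a : A} (ha : s a ≠ t a) (haB : a ∈ B) (haC : a ∈ C) : B = C :=
  (hB.2 C hC.1 (hC.subset_of_mem hB.1 ha haC haB)).symm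

end Blocks

section Periodic

variable {α : Type*}

theorem Function.exists_iterate_mem_periodicPts [Finite α] (f : α → α) (x : α) :
    ∃ m, f^[m] x ∈ periodicPts f := by
  obtain ⟨m, m', hne, heq⟩ := Finite.exists_ne_map_eq_of_infinite (f^[·] x)
  wlog hlt : m < m' generalizing m m'
  · exact this m' m hne.symm heq.symm (by omega)
  refine ⟨m, m' - m, by omega, ?_⟩
  rw [IsPeriodicPt, IsFixedPt, ← iterate_add_apply, Nat.sub_add_cancel hlt.le]
  exact heq.symm

theorem Function.iterate_eq_iterate_iff_modEq {f : α → α} {x : α} (hx : x ∈ periodicPts f)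
    (k l : ℕ) : f^[k] x = f^[l] x ↔ k ≡ l [MOD minimalPeriod f x] := by
  have hpos := minimalPeriod_pos_of_mem_periodicPts hx
  rw [← iterate_mod_minimalPeriod_eq (n := k), ← iterate_mod_minimalPeriod_eq (n := l),
    iterate_eq_iterate_iff_of_lt_minimalPeriod (Nat.mod_lt _ hpos) (Nat.mod_lt _ hpos)]
  rfl

theorem exists_periodic_chain [Finite α] {R : α → α → Prop} (hR : ∀ x y, R x y → ∃ z, R y z)
    {x y : α} (hxy : R x y) :
    ∃ n, 0 < n ∧ ∃ v : ℕ → α, (∀ k l, v k = v l ↔ k ≡ l [MOD n]) ∧ ∀ k, R (v k) (v (k + 1)) := by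
  classical
  let f : α → α := fun x => if h : ∃ y, R x y then h.choose else x
  have hf : ∀ x, (∃ y, R x y) → R x (f x) := fun x h => by
    simpa only [f, dif_pos h] using h.choose_spec
  have orbit : ∀ k, ∃ y, R (f^[k] x) y := by
    intro k
    induction k with
    | zero => exact ⟨y, hxy⟩
    | succ k ih => rw [iterate_succ_apply']; exact hR _ _ (hf _ ih)
  obtain ⟨m, hm⟩ := exists_iterate_mem_periodicPts f x
  refine ⟨minimalPeriod f (f^[m] x), minimalPeriod_pos_of_mem_periodicPts hm, (f^[·] (f^[m] x)),
    iterate_eq_iterate_iff_modEq hm, fun k => ?_⟩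
  simp only [← iterate_add_apply, iterate_succ_apply']
  exact hf _ (orbit _)

end Periodic

section Cycles

variable {V A : Type} {s t : A → V}

variable (s t) in
def SignedStep (a : A) (e : ℝ) (i j : V) : Prop :=
  (e = 1 ∧ s a = i ∧ t a = j) ∨ (e = -1 ∧ s a = j ∧ t a = i)

variable (s t) in
/-- An unoriented simple cycle of length `n`, indexed periodically by `ℕ`. -/
structure IsSignedCycle (n : ℕ) (v : ℕ → V) (α : ℕ → A) (e : ℕ → ℝ) : Prop where
  length_pos : 0 < n
  vert_eq_iff : ∀ k l, v k = v l ↔ k ≡ l [MOD n]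
  step : ∀ k, SignedStep s t (α k) (e k) (v k) (v (k + 1))

open scoped Classical in
noncomputable def cycleFlow (n : ℕ) (α : ℕ → A) (e : ℕ → ℝ) : A → ℝ :=
  ∑ k ∈ range n, e k • Pi.single (α k) 1

open scoped Classical in
theorem SignedStep.smul_arrowBoundary {a : A} {e : ℝ} {i j : V} (h : SignedStep s t a e i j) :
    e • arrowBoundary s t a = Pi.single j 1 - Pi.single i 1 := by
  rcases h with ⟨rfl, rfl, rfl⟩ | ⟨rfl, rfl, rfl⟩
  · rw [one_smul, arrowBoundary]
  · rw [neg_one_smul, arrowBoundary, neg_sub]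

theorem boundaryOn_cycleFlow [Fintype A] (B : Set A) (n : ℕ) (α : ℕ → A) (e : ℕ → ℝ) :
    boundaryOn s t B (cycleFlow n α e) =
      ∑ k ∈ range n, e k • B.indicator (arrowBoundary s t) (α k) := by
  classical
  simp only [cycleFlow, map_sum, map_smul, boundaryOn_single]

theorem boundaryOn_cycleFlow_eq_zero_of_loops [Fintype A] {B : Set A} {n : ℕ} {α : ℕ → A}
    (h : ∀ k, α k ∈ B → s (α k) = t (α k)) (e : ℕ → ℝ) :
    boundaryOn s t B (cycleFlow n α e) = 0 := by
  rw [boundaryOn_cycleFlow]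
  exact sum_eq_zero fun k _ => smul_eq_zero_of_right _ <|
    Set.indicator_apply_eq_zero.2 fun hk => arrowBoundary_eq_zero_of_loop (h k hk)

namespace IsSignedCycle

variable {n : ℕ} {v : ℕ → V} {α : ℕ → A} {e : ℕ → ℝ}

theorem boundaryOn_cycleFlow_eq_zero [Fintype A] (hc : IsSignedCycle s t n v α e) {B : Set A}
    (hB : ∀ k, α k ∈ B) : boundaryOn s t B (cycleFlow n α e) = 0 := by
  classical
  calc boundaryOn s t B (cycleFlow n α e)
      = ∑ k ∈ range n, (Pi.single (v (k + 1)) 1 - Pi.single (v k) 1 : V → ℝ) := by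
        rw [boundaryOn_cycleFlow]
        exact sum_congr rfl fun k _ => by
          rw [Set.indicator_of_mem (hB k), (hc.step k).smul_arrowBoundary]
    _ = Pi.single (v n) 1 - Pi.single (v 0) 1 := sum_range_sub (fun k => Pi.single (v k) 1) n
    _ = 0 := by rw [(hc.vert_eq_iff n 0).2 (by simp [Nat.ModEq]), sub_self]

theorem qVerts_subset (hc : IsSignedCycle s t n v α e) :
    QVerts s t (Set.range α) ⊆ Set.range v := by
  rintro _ ⟨_, ⟨k, rfl⟩, h | h⟩ <;> rcases hc.step k with ⟨-, h1, h2⟩ | ⟨-, h1, h2⟩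
  exacts [⟨k, h1.symm.trans h⟩, ⟨k + 1, h1.symm.trans h⟩, ⟨k + 1, h2.symm.trans h⟩,
    ⟨k, h2.symm.trans h⟩]

theorem reflTransGen_avoidStep (hc : IsSignedCycle s t n v α e) {X : Set V} (k d : ℕ)
    (h : ∀ j ≤ d, v (k + j) ∉ X) :
    ReflTransGen (AvoidStep s t (Set.range α) X) (v k) (v (k + d)) := by
  induction d with
  | zero => rfl
  | succ d ih =>
    refine (ih fun j hj => h j (by omega)).tail ⟨h d (by omega), h (d + 1) le_rfl, α (k + d),
      ⟨_, rfl⟩, ?_⟩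
    rcases hc.step (k + d) with ⟨-, h1, h2⟩ | ⟨-, h1, h2⟩
    exacts [.inl ⟨h1, h2⟩, .inr ⟨h1, h2⟩]

/-- Walk forwards from `v (m + 1)` for fewer than `n` steps, so that `v m` is never passed. -/
theorem reflTransGen_avoidStep_succ (hc : IsSignedCycle s t n v α e) {X : Set V} {m k : ℕ}
    (hm : ∀ j, v j ∈ X → v j = v m) (hk : v k ∉ X) :
    ReflTransGen (AvoidStep s t (Set.range α) X) (v (m + 1)) (v k) := by
  have hn := hc.length_pos
  -- `d ≡ k - (m + 1) [MOD n]`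
  set d := (k + (n - 1) * (m + 1)) % n
  have hd : m + 1 + d ≡ k [MOD n] := by
    refine ((Nat.mod_modEq _ n).add_left (m + 1)).trans ?_
    have : (n - 1) * (m + 1) + (m + 1) = n * (m + 1) := by
      rw [← Nat.succ_mul, Nat.succ_eq_add_one, Nat.sub_add_cancel hn]
    rw [show m + 1 + (k + (n - 1) * (m + 1)) = k + n * (m + 1) by omega]
    exact Nat.add_mul_mod_self_left k n (m + 1)
  rw [← (hc.vert_eq_iff _ _).2 hd]
  refine hc.reflTransGen_avoidStep _ _ fun j hj hjX => ?_
  obtain rfl | hjd := eq_or_lt_of_le hj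
  · exact hk ((hc.vert_eq_iff _ _).2 hd ▸ hjX)
  · have hdvd := (Nat.modEq_iff_dvd' (by omega)).1 ((hc.vert_eq_iff _ _).1 (hm _ hjX)).symm
    have := Nat.le_of_dvd (by omega) hdvd
    have := Nat.mod_lt (k + (n - 1) * (m + 1)) hn
    omega

theorem isBiconnQ (hc : IsSignedCycle s t n v α e) : IsBiconnQ s t (Set.range α) := by
  refine ⟨⟨α 0, 0, rfl⟩, fun X hX i hi j hj => ?_⟩
  obtain ⟨m, hm⟩ : ∃ m, ∀ j, v j ∈ X → v j = v m := by
    by_cases h : ∃ m, v m ∈ X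
    · obtain ⟨m, hm⟩ := h
      exact ⟨m, fun j hj => hX hj hm⟩
    · exact ⟨0, fun j hj => (not_exists.1 h j hj).elim⟩
  obtain ⟨k, rfl⟩ := hc.qVerts_subset hi.1
  obtain ⟨l, rfl⟩ := hc.qVerts_subset hj.1
  exact (Std.Symm.symm _ _ (hc.reflTransGen_avoidStep_succ hm hi.2)).trans
    (hc.reflTransGen_avoidStep_succ hm hj.2)

theorem boundaryOn_cycleFlow_of_isBlockQ [Fintype A] (hc : IsSignedCycle s t n v α e)
    {B : Set A} (hB : IsBlockQ s t B) : boundaryOn s t B (cycleFlow n α e) = 0 := by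
  by_cases h : ∃ k, α k ∈ B ∧ s (α k) ≠ t (α k)
  · obtain ⟨k, hkB, hk⟩ := h
    exact hc.boundaryOn_cycleFlow_eq_zero fun j =>
      hB.subset_of_mem hc.isBiconnQ hk hkB ⟨k, rfl⟩ ⟨j, rfl⟩
  · push Not at h
    exact boundaryOn_cycleFlow_eq_zero_of_loops h e

end IsSignedCycle

end Cycles

section CycleSpace

variable {V A : Type} {s t : A → V}

theorem Conserved.exists_signedStep [Fintype A] [DecidableEq V] {lam : A → ℝ}
    (hc : Conserved s t lam) {a : A} {e : ℝ} {h i : V}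
    (hin : SignedStep s t a e h i) (hpos : 0 < e * lam a) :
    ∃ j b e', SignedStep s t b e' i j ∧ 0 < e' * lam b := by
  by_contra! hout
  have hs : ∀ b ∈ univ.filter (s · = i), lam b ≤ 0 := fun b hb => by
    simpa using hout (t b) b 1 (.inl ⟨rfl, (mem_filter.1 hb).2, rfl⟩)
  have ht : ∀ b ∈ univ.filter (t · = i), 0 ≤ lam b := fun b hb => by
    simpa using hout (s b) b (-1) (.inr ⟨rfl, rfl, (mem_filter.1 hb).2⟩)
  have hci := hc i
  rcases hin with ⟨rfl, -, hai⟩ | ⟨rfl, hai, -⟩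
  · have := sum_pos' ht ⟨a, by simp [hai], by simpa using hpos⟩
    linarith [sum_nonpos hs]
  · have := sum_neg' hs ⟨a, by simp [hai], by simpa using hpos⟩
    linarith [sum_nonneg ht]

theorem ConservedOn.exists_isSignedCycle [Finite V] [Fintype A] {lam : A → ℝ}
    (hc : ConservedOn s t Set.univ lam) {a : A} (ha : lam a ≠ 0) :
    ∃ n v α e, IsSignedCycle s t n v α e ∧ ∀ k, 0 < e k * lam (α k) := by
  classical
  replace hc := conserved_iff_conservedOn_univ.2 hc
  obtain ⟨i, j, e, hstep, hpos⟩ : ∃ i j e, SignedStep s t a e i j ∧ 0 < e * lam a := by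
    rcases ha.lt_or_gt with hneg | hpos
    · exact ⟨t a, s a, -1, .inr ⟨rfl, rfl, rfl⟩, by linarith⟩
    · exact ⟨s a, t a, 1, .inl ⟨rfl, rfl, rfl⟩, by linarith⟩
  obtain ⟨n, hn, v, hv, hR⟩ := exists_periodic_chain
    (R := fun i j => ∃ b e, SignedStep s t b e i j ∧ 0 < e * lam b)
    (fun _ _ ⟨_, _, hstep, hpos⟩ => hc.exists_signedStep hstep hpos) ⟨a, e, hstep, hpos⟩
  choose α e hstep hpos using hR
  exact ⟨n, v, α, e, ⟨hn, hv, hstep⟩, hpos⟩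

theorem cycleFlow_apply [DecidableEq A] (n : ℕ) (α : ℕ → A) (e : ℕ → ℝ) (a : A) :
    cycleFlow n α e a = ∑ k ∈ range n, if α k = a then e k else 0 := by
  simp [cycleFlow, Finset.sum_apply, Pi.single_apply, eq_comm]

theorem support_cycleFlow_subset {n : ℕ} {α : ℕ → A} {e : ℕ → ℝ} {lam : A → ℝ}
    (hpos : ∀ k, 0 < e k * lam (α k)) : support (cycleFlow n α e) ⊆ support lam := by
  classical
  intro a ha h0
  refine ha ((cycleFlow_apply n α e a).trans (sum_eq_zero fun k _ => if_neg fun hk => ?_))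
  simpa [hk, h0] using hpos k

theorem mul_cycleFlow_apply_pos {n : ℕ} {α : ℕ → A} {e : ℕ → ℝ} {lam : A → ℝ}
    (hpos : ∀ k, 0 < e k * lam (α k)) {j : ℕ} (hj : j < n) :
    0 < lam (α j) * cycleFlow n α e (α j) := by
  classical
  rw [cycleFlow_apply, mul_sum]
  refine sum_pos' (fun k _ => ?_) ⟨j, mem_range.2 hj, by simpa [mul_comm] using hpos j⟩
  split_ifs with hk
  · rw [← hk, mul_comm]; exact (hpos k).le
  · rw [mul_zero]

variable (s t) in
def cycleFlows : Set (A → ℝ) :=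
  {f | ∃ n v α e, IsSignedCycle s t n v α e ∧ cycleFlow n α e = f}

/-- Subtracting a multiple of a cycle flow supported in the current kills one more arrow. -/
theorem ker_boundaryOn_univ_le_span_cycleFlows [Finite V] [Fintype A] :
    LinearMap.ker (boundaryOn s t Set.univ) ≤ Submodule.span ℝ (cycleFlows s t) := by
  intro lam hlam
  induction hN : (support lam).ncard using Nat.strong_induction_on generalizing lam with
  | _ N ih =>
  rcases eq_or_ne lam 0 with rfl | hne
  · exact zero_mem _
  obtain ⟨a, ha⟩ : ∃ a, lam a ≠ 0 := Function.ne_iff.1 hne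
  obtain ⟨n, v, α, e, hc, hpos⟩ :=
    (conservedOn_iff_boundaryOn_eq_zero.2 (LinearMap.mem_ker.1 hlam)).exists_isSignedCycle ha
  set f := cycleFlow n α e
  have hf : f (α 0) ≠ 0 := right_ne_zero_of_mul (mul_cycleFlow_apply_pos hpos hc.length_pos).ne'
  set c := lam (α 0) / f (α 0)
  have hsupp : support (lam - c • f) ⊂ support lam := by
    refine (Set.ssubset_iff_of_subset ((support_sub _ _).trans (Set.union_subset subset_rfl
      ((support_const_smul_subset c f).trans (support_cycleFlow_subset hpos))))).2
      ⟨α 0, right_ne_zero_of_mul (hpos 0).ne', ?_⟩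
    simp [c, div_mul_cancel₀ _ hf]
  have hker : lam - c • f ∈ LinearMap.ker (boundaryOn s t Set.univ) := by
    simp [LinearMap.mem_ker.1 hlam, f, hc.boundaryOn_cycleFlow_eq_zero fun _ => Set.mem_univ _]
  have := ih _ (hN ▸ Set.ncard_lt_ncard hsupp) hker rfl
  rw [← sub_add_cancel lam (c • f)]
  exact add_mem this (Submodule.smul_mem _ _ (Submodule.subset_span ⟨n, v, α, e, hc, rfl⟩))

theorem span_cycleFlows_le_ker_boundaryOn [Fintype A] {B : Set A} (hB : IsBlockQ s t B) :
    Submodule.span ℝ (cycleFlows s t) ≤ LinearMap.ker (boundaryOn s t B) :=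
  Submodule.span_le.2 fun _ ⟨_, _, _, _, hc, hf⟩ => hf ▸ hc.boundaryOn_cycleFlow_of_isBlockQ hB

end CycleSpace

section BlockDecomposition

variable {V A : Type} {s t : A → V}

open scoped Classical in
/-- Every non-loop arrow lies in exactly one block, and loops have zero boundary. -/
theorem sum_isBlockQ_indicator_arrowBoundary [Fintype A] (a : A) :
    ∑ B ∈ univ.filter (IsBlockQ s t), B.indicator (arrowBoundary s t) a = arrowBoundary s t a := by
  by_cases ha : s a = t a
  · rw [arrowBoundary_eq_zero_of_loop ha]
    exact sum_eq_zero fun B _ =>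
      Set.indicator_apply_eq_zero.2 fun _ => arrowBoundary_eq_zero_of_loop ha
  obtain ⟨B₀, hB₀, haB₀⟩ := exists_isBlockQ_mem (s := s) (t := t) a
  rw [sum_eq_single_of_mem B₀ (by simpa using hB₀) fun B hB hne => Set.indicator_of_notMem
    (fun haB => hne ((mem_filter.1 hB).2.eq_of_mem hB₀ ha haB haB₀)) _,
    Set.indicator_of_mem haB₀]

open scoped Classical in
theorem boundaryOn_univ_eq_sum_isBlockQ [Fintype A] (lam : A → ℝ) :
    boundaryOn s t Set.univ lam = ∑ B ∈ univ.filter (IsBlockQ s t), boundaryOn s t B lam := by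
  simp only [boundaryOn, Fintype.linearCombination_apply, Set.indicator_univ]
  simp_rw [← sum_isBlockQ_indicator_arrowBoundary (s := s) (t := t), smul_sum]
  exact sum_comm

end BlockDecomposition

theorem stmt7_general {V A : Type} [Fintype V] [Fintype A] [DecidableEq V]
    (s t : A → V)
    (lam : A → ℝ) :
    Conserved s t lam ↔ ∀ B : Set A, IsBlockQ s t B → ConservedOn s t B lam := by
  simp only [conserved_iff_conservedOn_univ, conservedOn_iff_boundaryOn_eq_zero]
  refine ⟨fun h B hB => span_cycleFlows_le_ker_boundaryOn hB
    (ker_boundaryOn_univ_le_span_cycleFlows h), fun h => ?_⟩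
  rw [boundaryOn_univ_eq_sum_isBlockQ]
  exact sum_eq_zero fun B hB => h B (by simpa using hB)

/-- A current on a connected quiver is conserved iff its restriction to each
biconnected component is conserved. -/
theorem stmt7 {V A : Type} [Fintype V] [Fintype A] [DecidableEq V] [DecidableEq A]
    (s t : A → V)
    (hconn : ∀ i j : V, Relation.ReflTransGen (UStep s t) i j)
    (lam : A → ℝ) :
    Conserved s t lam ↔ ∀ B : Set A, IsBlockQ s t B → ConservedOn s t B lam :=
  stmt7_general s t lam
end

section
/- If a quiver Q admits a cut, then every maximal weak cut of Q is a cut, and Q admits an R-charge. Conversely, if Q admits an R-charge, then every maximal weak cut is a cut. Hence the following are equivalent: (i) Q admits a cut; (ii) Q admits an R-charge; (iii) every maximal weak cut of Q is a cut. -/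
/-!
A cut `I` gives the R-charge `2 · 𝟙_I`, and since there are only finitely many weak cuts, a
maximal one exists. The substance is that an R-charge `R` forces a maximal weak cut `I` to be a
cut. Suppose a simple cycle `w` missed `I`. Each arrow `a` of `w` lies on a simple cycle `U a`
meeting `I` exactly once, for otherwise `I ∪ {a}` would still be a weak cut. The weight
`g = R - 2 · 𝟙_I` is nonnegative on every simple cycle, vanishes on each `U a` and equals `2` on
`w`. But `∑ₐ U a - w` is a nonnegative integral circulation, hence a sum of simple cycles, so its
`g`-weight `0 - 2` would be nonnegative.
-/

open Relation

/-- A cut: every simple oriented cycle contains exactly one arrow of `I`. -/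
def IsCut {V A : Type} [DecidableEq A] (s t : A → V) (I : Finset A) : Prop :=
  ∀ w : SimpleCycle s t, (w.arrows.filter (fun a => decide (a ∈ I))).length = 1

/-- A weak cut: every simple oriented cycle contains at most one arrow of `I`. -/
def IsWeakCut {V A : Type} [DecidableEq A] (s t : A → V) (I : Finset A) : Prop :=
  ∀ w : SimpleCycle s t, (w.arrows.filter (fun a => decide (a ∈ I))).length ≤ 1

/-- An R-charge: a real function on arrows summing to 2 around every simple oriented cycle. -/
def IsRCharge {V A : Type} (s t : A → V) (R : A → ℝ) : Prop :=
  ∀ w : SimpleCycle s t, (w.arrows.map R).sum = 2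

open Function

theorem Function.exists_mem_periodicPts {α : Type*} [Finite α] [Nonempty α] (f : α → α) :
    ∃ x, x ∈ periodicPts f := by
  obtain ⟨m, n, hmn, h⟩ :=
    Finite.exists_ne_map_eq_of_infinite fun k => f^[k] (Classical.arbitrary α)
  wlog hlt : m < n generalizing m n
  · exact this n m hmn.symm h.symm (by omega)
  refine ⟨f^[m] (Classical.arbitrary α), mk_mem_periodicPts (n := n - m) (by omega) ?_⟩
  rw [IsPeriodicPt, IsFixedPt, ← iterate_add_apply, Nat.sub_add_cancel hlt.le]
  exact h.symm

variable {V A : Type} {s t : A → V}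

namespace SimpleCycle

theorem arrows_nodup (w : SimpleCycle s t) : w.arrows.Nodup := w.simple.of_map

theorem map_target_eq_rotate (w : SimpleCycle s t) :
    w.arrows.map t = (w.arrows.map s).rotate 1 := by
  apply List.ext_get (by simp)
  intro k hk _
  rw [List.get_rotate]
  simpa using w.chain k (by simpa using hk)

theorem exists_arrows_eq_map_range (f : ℕ → A) {n : ℕ} (hn : 0 < n)
    (hchain : ∀ k, t (f k) = s (f (k + 1))) (hper : ∀ k, f (k % n) = f k)
    (hinj : Set.InjOn (s ∘ f) (Set.Iio n)) :
    ∃ c : SimpleCycle s t, c.arrows = (List.range n).map f := by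
  refine ⟨⟨(List.range n).map f, by simpa using hn.ne', fun k hk => ?_, ?_⟩, rfl⟩
  · simp [hchain, hper]
  · rw [List.map_map]
    exact List.nodup_range.map_on fun x hx y hy h =>
      hinj (by simpa using hx) (by simpa using hy) h

theorem length_filter_mem [DecidableEq A] (w : SimpleCycle s t) (I : Finset A) :
    (w.arrows.filter (fun a => decide (a ∈ I))).length = (w.arrows.toFinset ∩ I).card := by
  rw [← List.toFinset_card_of_nodup (w.arrows_nodup.filter _), List.toFinset_filter]
  simp only [decide_eq_true_eq, Finset.filter_mem_eq_inter]

end SimpleCycle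

/-- Follow a successor map on the sources of `X`: a periodic point of it traces a simple cycle. -/
theorem exists_simpleCycle_subset [Finite V] {X : Set A} (hne : X.Nonempty)
    (hX : ∀ a ∈ X, ∃ b ∈ X, s b = t a) : ∃ c : SimpleCycle s t, ∀ a ∈ c.arrows, a ∈ X := by
  have hout : ∀ v : s '' X, ∃ a ∈ X, s a = v := fun v => v.2
  choose out houtX hout using hout
  let next : s '' X → s '' X := fun v =>
    ⟨t (out v), let ⟨b, hb, hbt⟩ := hX _ (houtX v); ⟨b, hb, hbt⟩⟩
  have : Nonempty (s '' X) := (hne.image s).to_subtype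
  obtain ⟨p, hp⟩ := exists_mem_periodicPts next
  obtain ⟨c, hc⟩ := SimpleCycle.exists_arrows_eq_map_range (s := s) (t := t)
    (fun k => out (next^[k] p)) (minimalPeriod_pos_of_mem_periodicPts hp)
    (fun k => by rw [hout, iterate_succ_apply'])
    (fun k => by rw [(isPeriodicPt_minimalPeriod next p).iterate_mod_apply])
    (fun x hx y hy h =>
      iterate_injOn_Iio_minimalPeriod hx hy (Subtype.ext (by simpa [hout] using h)))
  refine ⟨c, fun a ha => ?_⟩
  rw [hc] at ha
  obtain ⟨k, -, rfl⟩ := List.mem_map.1 ha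
  exact houtX _

/-- Multisets of arrows encode the nonnegative integral flows. -/
def IsCirculation (s t : A → V) (F : Multiset A) : Prop := F.map t = F.map s

theorem SimpleCycle.isCirculation (w : SimpleCycle s t) : IsCirculation s t w.arrows := by
  rw [IsCirculation, Multiset.map_coe, Multiset.map_coe, Multiset.coe_eq_coe,
    w.map_target_eq_rotate]
  exact List.rotate_perm _ _

namespace IsCirculation

theorem bind {ι : Type*} {m : Multiset ι} {F : ι → Multiset A}
    (h : ∀ i ∈ m, IsCirculation s t (F i)) : IsCirculation s t (m.bind F) := by
  rw [IsCirculation, Multiset.map_bind, Multiset.map_bind]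
  exact Multiset.bind_congr h

variable {F G : Multiset A}

theorem exists_simpleCycle_le [Finite V] (hF : IsCirculation s t F) (h0 : F ≠ 0) :
    ∃ c : SimpleCycle s t, (c.arrows : Multiset A) ≤ F := by
  obtain ⟨c, hc⟩ := exists_simpleCycle_subset (s := s) (t := t) (X := {a | a ∈ F})
    (Multiset.exists_mem_of_ne_zero h0)
    fun a ha => Multiset.mem_map.1 (hF ▸ Multiset.mem_map_of_mem t ha)
  exact ⟨c, (Multiset.le_iff_subset (Multiset.coe_nodup.2 c.arrows_nodup)).2 hc⟩

variable [DecidableEq A]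

theorem tsub (hF : IsCirculation s t F) (hG : IsCirculation s t G) (hle : G ≤ F) :
    IsCirculation s t (F - G) := by
  rw [IsCirculation, ← tsub_add_cancel_of_le hle, Multiset.map_add, Multiset.map_add, hG] at hF
  exact add_right_cancel hF

/-- Peel off a simple cycle and recurse: every circulation is a sum of simple cycles. -/
theorem sum_map_nonneg [Finite V] {M : Type*} [AddCommMonoid M] [PartialOrder M]
    [IsOrderedAddMonoid M] {g : A → M} (hg : ∀ c : SimpleCycle s t, 0 ≤ (c.arrows.map g).sum)
    (hF : IsCirculation s t F) : 0 ≤ (F.map g).sum := by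
  induction F using Multiset.strongInductionOn with
  | ih F ih =>
  rcases eq_or_ne F 0 with rfl | h0
  · simp
  obtain ⟨c, hc⟩ := hF.exists_simpleCycle_le h0
  have hlt : F - c.arrows < F :=
    (lt_add_of_pos_right _ (pos_iff_ne_zero.2 (by simpa using c.nonempty))).trans_eq
      (tsub_add_cancel_of_le hc)
  rw [← tsub_add_cancel_of_le hc, Multiset.map_add, Multiset.sum_add]
  exact add_nonneg (ih _ hlt (hF.tsub c.isCirculation hc)) (by simpa using hg c)

end IsCirculation

section Cuts

variable [DecidableEq A] {I : Finset A}

theorem IsCut.isRCharge (hI : IsCut s t I) : IsRCharge s t fun a => if a ∈ I then 2 else 0 :=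
  fun w => by simp [List.sum_map_ite, hI w]

theorem IsWeakCut.exists_simpleCycle_of_maximal (hI : IsWeakCut s t I)
    (hmax : ∀ I' : Finset A, IsWeakCut s t I' → I ⊆ I' → I' = I) {a : A} (ha : a ∉ I) :
    ∃ u : SimpleCycle s t,
      a ∈ u.arrows ∧ (u.arrows.filter (fun x => decide (x ∈ I))).length = 1 := by
  have hins : ¬ IsWeakCut s t (insert a I) := fun h =>
    ha (hmax _ h (Finset.subset_insert a I) ▸ Finset.mem_insert_self a I)
  simp only [IsWeakCut, not_forall, not_le] at hins
  obtain ⟨u, hu⟩ := hins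
  have hu1 := hI u
  rw [SimpleCycle.length_filter_mem] at hu hu1
  by_cases hau : a ∈ u.arrows
  · rw [Finset.inter_insert_of_mem (List.mem_toFinset.2 hau),
      Finset.card_insert_of_notMem (by simp [ha])] at hu
    refine ⟨u, hau, ?_⟩
    rw [SimpleCycle.length_filter_mem]
    omega
  · rw [Finset.inter_insert_of_notMem (by simpa using hau)] at hu
    omega

theorem IsRCharge.sum_map_sub_indicator {R : A → ℝ} (hR : IsRCharge s t R) (I : Finset A)
    (c : SimpleCycle s t) :
    (c.arrows.map fun a => R a - if a ∈ I then 2 else 0).sum =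
      2 - 2 * (c.arrows.filter (fun x => decide (x ∈ I))).length := by
  rw [← Multiset.sum_coe, ← Multiset.map_coe, Multiset.sum_map_sub]
  simp [hR c, List.sum_map_ite]
  ring

theorem IsRCharge.isCut_of_maximal [Finite V] {R : A → ℝ} (hR : IsRCharge s t R)
    (hI : IsWeakCut s t I) (hmax : ∀ I' : Finset A, IsWeakCut s t I' → I ⊆ I' → I' = I) :
    IsCut s t I := by
  intro w
  refine le_antisymm (hI w) (Nat.one_le_iff_ne_zero.2 fun hw => ?_)
  have hwI : ∀ a ∈ w.arrows, a ∉ I := by simpa [List.filter_eq_nil_iff] using hw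
  choose U hU using fun a : {a // a ∈ (w.arrows : Multiset A)} =>
    hI.exists_simpleCycle_of_maximal hmax (hwI a a.2)
  let g : A → ℝ := fun a => R a - if a ∈ I then 2 else 0
  have hg := hR.sum_map_sub_indicator I
  have hg_nonneg : ∀ c : SimpleCycle s t, 0 ≤ (c.arrows.map g).sum := fun c => by
    have : ((c.arrows.filter (fun x => decide (x ∈ I))).length : ℝ) ≤ 1 := by
      exact_mod_cast hI c
    rw [hg c]
    linarith
  let F := (w.arrows : Multiset A).attach.bind fun a => ((U a).arrows : Multiset A)
  have hle : (w.arrows : Multiset A) ≤ F :=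
    (Multiset.le_iff_subset (Multiset.coe_nodup.2 w.arrows_nodup)).2 fun a ha =>
      Multiset.mem_bind.2 ⟨⟨a, ha⟩, Multiset.mem_attach _ _, Multiset.mem_coe.2 (hU ⟨a, ha⟩).1⟩
  have hF : IsCirculation s t (F - w.arrows) :=
    (IsCirculation.bind fun a _ => (U a).isCirculation).tsub w.isCirculation hle
  have hFg : (F.map g).sum = 0 := by
    rw [Multiset.map_bind, Multiset.sum_bind]
    refine Multiset.sum_eq_zero fun x hx => ?_
    obtain ⟨a, -, rfl⟩ := Multiset.mem_map.1 hx
    rw [Multiset.map_coe, Multiset.sum_coe, hg, (hU a).2]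
    norm_num
  have hwg : ((w.arrows : Multiset A).map g).sum = 2 := by simpa [hw] using hg w
  have hrest := hF.sum_map_nonneg hg_nonneg
  rw [← tsub_add_cancel_of_le hle, Multiset.map_add, Multiset.sum_add] at hFg
  linarith

theorem exists_isWeakCut_maximal [Finite A] :
    ∃ I : Finset A, IsWeakCut s t I ∧ ∀ I' : Finset A, IsWeakCut s t I' → I ⊆ I' → I' = I := by
  obtain ⟨I, hI, hmax⟩ :=
    (Set.toFinite {I : Finset A | IsWeakCut s t I}).exists_maximal ⟨∅, fun w => by simp⟩
  exact ⟨I, hI, fun I' hI' hsub => (hmax hI' hsub).antisymm hsub⟩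

end Cuts

theorem stmt10_general {V A : Type} [Fintype V] [Fintype A] [DecidableEq A]
    (s t : A → V) :
    List.TFAE [
      ∃ I : Finset A, IsCut s t I,
      ∃ R : A → ℝ, IsRCharge s t R,
      ∀ I : Finset A, IsWeakCut s t I →
        (∀ I' : Finset A, IsWeakCut s t I' → I ⊆ I' → I' = I) → IsCut s t I] := by
  tfae_have 1 → 2 := fun ⟨_, hI⟩ => ⟨_, hI.isRCharge⟩
  tfae_have 2 → 3 := fun ⟨_, hR⟩ _ hI hmax => hR.isCut_of_maximal hI hmax
  tfae_have 3 → 1 := fun h =>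
    let ⟨I, hI, hmax⟩ := exists_isWeakCut_maximal (s := s) (t := t)
    ⟨I, h I hI hmax⟩
  tfae_finish

/-- The following are equivalent: the quiver admits a cut; it admits an R-charge;
every maximal weak cut is a cut. -/
theorem stmt10 {V A : Type} [Fintype V] [Fintype A] [DecidableEq V] [DecidableEq A]
    (s t : A → V) :
    List.TFAE [
      ∃ I : Finset A, IsCut s t I,
      ∃ R : A → ℝ, IsRCharge s t R,
      ∀ I : Finset A, IsWeakCut s t I →
        (∀ I' : Finset A, IsWeakCut s t I' → I ⊆ I' → I' = I) → IsCut s t I] :=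
  stmt10_general s t
end
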